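/- Let I and J be nonzero ideals of E which are kernel ideals. If I*φ and J*φ are isomorphic Drinfeld modules over k, then I = Ju for some nonzero u ∈ D. -/

import Mathlib

/- Framework: Drinfeld modules over a finite A-field `k`, realized concretely.
`k{τ}` is the subring of additive endomorphisms of an algebraic closure of `k`
generated by the `q`-power Frobenius `τ` and multiplications by elements of `k`. -/

open Polynomial

noncomputable section

namespace Drinfeld

variable (p m : ℕ) [Fact p.Prime]
variable (Fq k : Type) [Field Fq] [Fintype Fq] [Field k] [Fintype k] [CharP k p]

/-- A fixed algebraic closure of `k`. -/
abbrev Kb := AlgebraicClosure k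

variable (hFq : Fintype.card Fq = p ^ m)

/-- The `q`-power Frobenius `τ : x ↦ x^q` as an additive endomorphism of `Kb k`. -/
def tau : AddMonoid.End (Kb k) where
  toFun x := x ^ Fintype.card Fq
  map_zero' := zero_pow Fintype.card_ne_zero
  map_add' x y := by
    haveI : CharP (Kb k) p :=
      charP_of_injective_algebraMap (algebraMap k (Kb k)).injective p
    simp only [hFq]
    exact add_pow_char_pow x y p m

/-- Multiplication by `c ∈ k` as an additive endomorphism of `Kb k`. -/
def ml (c : k) : AddMonoid.End (Kb k) :=
  AddMonoidHom.mulLeft (algebraMap k (Kb k) c)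

/-- The twisted polynomial ring `k{τ}`. -/
def skewPoly : Subring (AddMonoid.End (Kb k)) :=
  Subring.closure (insert (tau p m Fq k hFq) (Set.range (ml k)))

/-- The additive endomorphism `Σᵢ cᵢ ∘ τ^i` attached to a finitely supported
family of coefficients `c : ℕ →₀ k`. -/
def ofCoeffs (c : ℕ →₀ k) : AddMonoid.End (Kb k) :=
  c.sum fun i a => ml k a * tau p m Fq k hFq ^ i

/-- A Drinfeld module of rank `r` over the `A`-field `(k, γ)`:
a ring homomorphism `φ : A = Fq[T] → k{τ}` with
`φ_a = γ(a) + g₁(a) τ + ⋯ + g_{r·deg a}(a) τ^{r·deg a}` and `g_{r · deg a}(a) ≠ 0`. -/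
structure DrinfeldModule (γ : Polynomial Fq →+* k) (r : ℕ) : Type where
  toRingHom : Polynomial Fq →+* AddMonoid.End (Kb k)
  coeffs : Polynomial Fq → ℕ →₀ k
  eq_ofCoeffs : ∀ a, toRingHom a = ofCoeffs p m Fq k hFq (coeffs a)
  coeff_zero : ∀ a, coeffs a 0 = γ a
  coeff_top : ∀ a, a ≠ 0 → coeffs a (r * a.natDegree) ≠ 0
  coeff_eq_zero : ∀ a i, r * a.natDegree < i → coeffs a i = 0

variable {γ : Polynomial Fq →+* k} {r : ℕ}

/-- The endomorphism ring `End_k(φ)`: the centralizer of `φ(A)` in `k{τ}`. -/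
def EndRing (φ : DrinfeldModule p m Fq k hFq γ r) : Subring (AddMonoid.End (Kb k)) :=
  skewPoly p m Fq k hFq ⊓ Subring.centralizer (Set.range ⇑φ.toRingHom)

/-- `u` is an isogeny `φ → ψ`: a nonzero element of `k{τ}` with `u φ_a = ψ_a u`. -/
def IsIsogeny (φ ψ : DrinfeldModule p m Fq k hFq γ r) (u : AddMonoid.End (Kb k)) : Prop :=
  u ≠ 0 ∧ u ∈ skewPoly p m Fq k hFq ∧ ∀ a, u * φ.toRingHom a = ψ.toRingHom a * u

/-- Two Drinfeld modules are isomorphic when some isogeny between them lies in `k^×`. -/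
def Isomorphic (φ ψ : DrinfeldModule p m Fq k hFq γ r) : Prop :=
  ∃ c : k, c ≠ 0 ∧ ∀ a, ml k c * φ.toRingHom a = ψ.toRingHom a * ml k c

/-- The left ideal `k{τ}·s` of `k{τ}` generated by a subset `s`. -/
def leftSpan (s : Set (AddMonoid.End (Kb k))) : AddSubgroup (AddMonoid.End (Kb k)) :=
  AddSubgroup.closure {y | ∃ w ∈ skewPoly p m Fq k hFq, ∃ x ∈ s, y = w * x}

/-- `u` generates the left ideal `k{τ}·s` of `k{τ}`: `k{τ}s = k{τ}u`.
(Such a `u = u_I` exists by the right division algorithm in `k{τ}`.) -/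
def IsIdealGen (s : Set (AddMonoid.End (Kb k))) (u : AddMonoid.End (Kb k)) : Prop :=
  u ∈ skewPoly p m Fq k hFq ∧
    (leftSpan p m Fq k hFq s : Set (AddMonoid.End (Kb k))) =
      {y | ∃ w ∈ skewPoly p m Fq k hFq, y = w * u}

/-- `I` is an ideal of the (commutative) subring `E` of `k{τ}`. -/
def IsIdealOf (E : Subring (AddMonoid.End (Kb k))) (I : Set (AddMonoid.End (Kb k))) : Prop :=
  I ⊆ E ∧ (0 : AddMonoid.End (Kb k)) ∈ I ∧
    (∀ x ∈ I, ∀ y ∈ I, x + y ∈ I) ∧ (∀ x ∈ I, -x ∈ I) ∧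
    (∀ e ∈ E, ∀ x ∈ I, e * x ∈ I) ∧ (∀ e ∈ E, ∀ x ∈ I, x * e ∈ I)

/-- Membership in `D = End_k(φ) ⊗_A F = Frac(End_k(φ))` for an element of `k{τ}`:
`x ∈ D` iff `x·φ_a ∈ End_k(φ)` for some nonzero `a ∈ A`, i.e. `x = e/φ_a`. -/
def MemD (φ : DrinfeldModule p m Fq k hFq γ r) (x : AddMonoid.End (Kb k)) : Prop :=
  ∃ a : Polynomial Fq, a ≠ 0 ∧ x * φ.toRingHom a ∈ EndRing p m Fq k hFq φ

/-- `I` is a kernel ideal: `(k{τ}I) ∩ D = I`. -/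
def IsKernelIdeal (φ : DrinfeldModule p m Fq k hFq γ r)
    (I : Set (AddMonoid.End (Kb k))) : Prop :=
  {x | x ∈ leftSpan p m Fq k hFq I ∧ MemD p m Fq k hFq φ x} = I

/-- The subring `A[π] = φ(A)[π]` of `k{τ}`, where `π = τ^n` is the Frobenius of `k`. -/
def ApirOp (n : ℕ) (φ : DrinfeldModule p m Fq k hFq γ r) :
    Subring (AddMonoid.End (Kb k)) :=
  Subring.closure (insert (tau p m Fq k hFq ^ n) (Set.range ⇑φ.toRingHom))

/-- `φ` has height `H` (relative to the monic generator `P` of `𝔭 = ker γ`):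
the smallest `τ`-degree of a nonzero term of `φ_P` equals `H · deg P`, i.e. `φ_P` is
right-divisible by `τ^{H·deg P}` but not by `τ^{H·deg P + 1}`. -/
def HasHeight (φ : DrinfeldModule p m Fq k hFq γ r) (P : Polynomial Fq) (H : ℕ) : Prop :=
  (∃ u ∈ skewPoly p m Fq k hFq,
      φ.toRingHom P = u * tau p m Fq k hFq ^ (H * P.natDegree)) ∧
    ¬∃ u ∈ skewPoly p m Fq k hFq,
      φ.toRingHom P = u * tau p m Fq k hFq ^ (H * P.natDegree + 1)

/-- `I = J·u` for some nonzero `u ∈ D = Frac(E)`, written as `u = e/φ_a` with `e ∈ E`,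
`a ∈ A` both nonzero; equivalently `I·φ_a = J·e`. -/
def LinEquiv (φ : DrinfeldModule p m Fq k hFq γ r) (E : Subring (AddMonoid.End (Kb k)))
    (I J : Set (AddMonoid.End (Kb k))) : Prop :=
  ∃ e ∈ E, e ≠ 0 ∧ ∃ a : Polynomial Fq, a ≠ 0 ∧
    (fun x => x * φ.toRingHom a) '' I = (fun y => y * e) '' J

/-- The additive polynomial `u(X) ∈ k[X]` attached to `u ∈ k{τ}` (the unique polynomial
inducing `u` on the algebraic closure, if it exists; junk value `0` otherwise). -/
def toPoly (u : AddMonoid.End (Kb k)) : Polynomial k :=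
  letI := Classical.propDecidable (∃ P : Polynomial k, ∀ x : Kb k, Polynomial.aeval x P = u x)
  if h : ∃ P : Polynomial k, ∀ x : Kb k, Polynomial.aeval x P = u x then h.choose else 0

end Drinfeld

namespace Drinfeld

section Helpers

set_option linter.unusedSectionVars false

variable (p m : ℕ) [Fact p.Prime]
variable (Fq k : Type) [Field Fq] [Fintype Fq] [Field k] [Fintype k] [CharP k p]
variable (hFq : Fintype.card Fq = p ^ m)

lemma ml_apply (c : k) (x : Kb k) : ml k c x = algebraMap k (Kb k) c * x := rfl

lemma mul_apply' (f g : AddMonoid.End (Kb k)) (x : Kb k) : (f * g) x = f (g x) := rfl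

lemma end_ext {f g : AddMonoid.End (Kb k)} (h : ∀ x, f x = g x) : f = g :=
  DFunLike.ext f g h

lemma ml_mul (a b : k) : ml k (a * b) = ml k a * ml k b := by
  refine end_ext k fun x => ?_
  rw [mul_apply', ml_apply, ml_apply, ml_apply, map_mul, mul_assoc]

lemma ml_one : ml k (1 : k) = 1 := by
  refine end_ext k fun x => ?_
  rw [ml_apply, map_one, one_mul]; rfl

lemma ml_zero : ml k (0 : k) = 0 := by
  refine end_ext k fun x => ?_
  rw [ml_apply, map_zero, zero_mul]; rfl

lemma ml_add (a b : k) : ml k (a + b) = ml k a + ml k b := by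
  refine end_ext k fun x => ?_
  rw [ml_apply, map_add, add_mul]; rfl

lemma tau_apply (x : Kb k) : tau p m Fq k hFq x = x ^ Fintype.card Fq := rfl

lemma tau_pow_apply (i : ℕ) (x : Kb k) :
    (tau p m Fq k hFq ^ i) x = x ^ Fintype.card Fq ^ i := by
  induction i with
  | zero => simp
  | succ n ih =>
    rw [pow_succ']
    show tau p m Fq k hFq ((tau p m Fq k hFq ^ n) x) = _
    rw [ih, tau_apply, ← pow_mul, ← pow_succ]

lemma tau_mem : tau p m Fq k hFq ∈ skewPoly p m Fq k hFq :=
  Subring.subset_closure (Set.mem_insert _ _)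

lemma ml_mem (c : k) : ml k c ∈ skewPoly p m Fq k hFq :=
  Subring.subset_closure (Set.mem_insert_of_mem _ ⟨c, rfl⟩)

lemma ofCoeffs_mem (c : ℕ →₀ k) : ofCoeffs p m Fq k hFq c ∈ skewPoly p m Fq k hFq := by
  rw [ofCoeffs, Finsupp.sum]
  exact Subring.sum_mem _ fun i _ =>
    Subring.mul_mem _ (ml_mem p m Fq k hFq _) (Subring.pow_mem _ (tau_mem p m Fq k hFq) i)

/-- `ofCoeffs` as an additive monoid hom. -/
def OC : (ℕ →₀ k) →+ AddMonoid.End (Kb k) :=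
  Finsupp.liftAddHom fun i =>
    { toFun := fun a => ml k a * tau p m Fq k hFq ^ i
      map_zero' := by rw [ml_zero]; exact zero_mul _
      map_add' := fun a b => by rw [ml_add]; exact add_mul _ _ _ }

lemma ofCoeffs_eq_OC (c : ℕ →₀ k) : ofCoeffs p m Fq k hFq c = OC p m Fq k hFq c := by
  simp [OC, ofCoeffs, Finsupp.liftAddHom]

lemma ofCoeffs_single (i : ℕ) (a : k) :
    ofCoeffs p m Fq k hFq (Finsupp.single i a) = ml k a * tau p m Fq k hFq ^ i := by
  rw [ofCoeffs]
  exact Finsupp.sum_single_index (by rw [ml_zero]; exact zero_mul _)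

lemma ofCoeffs_zero : ofCoeffs p m Fq k hFq 0 = 0 := by
  rw [ofCoeffs_eq_OC, map_zero]

lemma ofCoeffs_add (c d : ℕ →₀ k) :
    ofCoeffs p m Fq k hFq (c + d) = ofCoeffs p m Fq k hFq c + ofCoeffs p m Fq k hFq d := by
  simp only [ofCoeffs_eq_OC, map_add]

lemma ofCoeffs_sub (c d : ℕ →₀ k) :
    ofCoeffs p m Fq k hFq (c - d) = ofCoeffs p m Fq k hFq c - ofCoeffs p m Fq k hFq d := by
  simp only [ofCoeffs_eq_OC, map_sub]

/-- The polynomial over `Kb k` computing `ofCoeffs c`. -/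
def toP (c : ℕ →₀ k) : Polynomial (Kb k) :=
  c.sum fun i a => Polynomial.C (algebraMap k (Kb k) a)
    * Polynomial.X ^ (Fintype.card Fq ^ i)

lemma ofCoeffs_apply_eq_eval (c : ℕ →₀ k) (x : Kb k) :
    ofCoeffs p m Fq k hFq c x = (toP Fq k c).eval x := by
  rw [ofCoeffs, toP, Finsupp.sum, Finsupp.sum, Polynomial.eval_finset_sum]
  rw [show ∀ (s : Finset ℕ) (f : ℕ → AddMonoid.End (Kb k)), (∑ i ∈ s, f i) x = ∑ i ∈ s, f i x
    from fun s f => AddMonoidHom.finsetSum_apply f s x]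
  refine Finset.sum_congr rfl fun i _ => ?_
  rw [mul_apply', ml_apply, tau_pow_apply]
  simp

lemma toP_coeff (c : ℕ →₀ k) (i : ℕ) :
    (toP Fq k c).coeff (Fintype.card Fq ^ i) = algebraMap k (Kb k) (c i) := by
  have hq : 2 ≤ Fintype.card Fq := Fintype.one_lt_card
  rw [toP, Finsupp.sum, Polynomial.finset_sum_coeff]
  simp only [Polynomial.coeff_C_mul, Polynomial.coeff_X_pow]
  by_cases hi : i ∈ c.support
  · rw [Finset.sum_eq_single_of_mem i hi]
    · simp
    · intro j _ hne
      have : ¬ (Fintype.card Fq ^ i = Fintype.card Fq ^ j) := fun h =>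
        hne (Nat.pow_right_injective hq h).symm
      simp [this]
  · rw [Finset.sum_eq_zero, Finsupp.notMem_support_iff.mp hi, map_zero]
    intro j hj
    have : ¬ (Fintype.card Fq ^ i = Fintype.card Fq ^ j) := fun h => by
      exact hi ((Nat.pow_right_injective hq h) ▸ hj)
    simp [this]

lemma ofCoeffs_ne_zero {c : ℕ →₀ k} (hc : c ≠ 0) : ofCoeffs p m Fq k hFq c ≠ 0 := by
  obtain ⟨i, hi⟩ : ∃ i, c i ≠ 0 := by
    by_contra h
    push_neg at h
    exact hc (Finsupp.ext h)
  have hP : toP Fq k c ≠ 0 := by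
    intro h
    apply hi
    have := toP_coeff Fq k c i
    rw [h, Polynomial.coeff_zero] at this
    exact (_root_.map_eq_zero (algebraMap k (Kb k))).mp this.symm
  intro h0
  apply hP
  apply Polynomial.funext
  intro x
  rw [← ofCoeffs_apply_eq_eval p m Fq k hFq, h0]
  simp

/-- Every element of `k{τ}` has a coefficient representation. -/
lemma monomial_mul_monomial (i j : ℕ) (a b : k) :
    (ml k a * tau p m Fq k hFq ^ i) * (ml k b * tau p m Fq k hFq ^ j)
      = ml k (a * b ^ Fintype.card Fq ^ i) * tau p m Fq k hFq ^ (i + j) := by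
  refine end_ext k fun x => ?_
  simp only [mul_apply', ml_apply, tau_pow_apply, map_mul, map_pow]
  rw [mul_pow, ← pow_mul, pow_add, mul_comm (Fintype.card Fq ^ i) (Fintype.card Fq ^ j),
    mul_assoc]

lemma ofCoeffs_mul_monomial (d : ℕ →₀ k) (s : ℕ) (b : k) :
    ofCoeffs p m Fq k hFq d * (ml k b * tau p m Fq k hFq ^ s)
      = ofCoeffs p m Fq k hFq
          (d.sum fun i x => Finsupp.single (i + s) (x * b ^ Fintype.card Fq ^ i)) := by
  rw [ofCoeffs_eq_OC p m Fq k hFq (d.sum _), map_finsuppSum]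
  rw [ofCoeffs, Finsupp.sum, Finsupp.sum, Finset.sum_mul]
  refine Finset.sum_congr rfl fun i _ => ?_
  rw [monomial_mul_monomial, ← ofCoeffs_eq_OC, ofCoeffs_single]

lemma monomial_mul_ofCoeffs (i : ℕ) (a : k) (d : ℕ →₀ k) :
    (ml k a * tau p m Fq k hFq ^ i) * ofCoeffs p m Fq k hFq d
      = ofCoeffs p m Fq k hFq
          (d.sum fun j b => Finsupp.single (i + j) (a * b ^ Fintype.card Fq ^ i)) := by
  rw [ofCoeffs_eq_OC p m Fq k hFq (d.sum _), map_finsuppSum]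
  rw [ofCoeffs, Finsupp.sum, Finsupp.sum, Finset.mul_sum]
  refine Finset.sum_congr rfl fun j _ => ?_
  rw [monomial_mul_monomial, ← ofCoeffs_eq_OC, ofCoeffs_single]

lemma ofCoeffs_mul (c d : ℕ →₀ k) :
    ∃ e : ℕ →₀ k, ofCoeffs p m Fq k hFq c * ofCoeffs p m Fq k hFq d
      = ofCoeffs p m Fq k hFq e := by
  induction c using Finsupp.induction with
  | zero => exact ⟨0, by rw [ofCoeffs_zero, zero_mul]⟩
  | single_add i a c' hi ha ih =>
    obtain ⟨e', he'⟩ := ih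
    refine ⟨(d.sum fun j b => Finsupp.single (i + j) (a * b ^ Fintype.card Fq ^ i)) + e', ?_⟩
    rw [ofCoeffs_add, add_mul, he', ofCoeffs_add, ofCoeffs_single,
      monomial_mul_ofCoeffs]

lemma exists_rep {f : AddMonoid.End (Kb k)} (hf : f ∈ skewPoly p m Fq k hFq) :
    ∃ c : ℕ →₀ k, f = ofCoeffs p m Fq k hFq c := by
  induction hf using Subring.closure_induction with
  | mem x hx =>
    rcases hx with h | ⟨c0, rfl⟩
    · exact ⟨Finsupp.single 1 1, by
        rw [h, ofCoeffs_single, ml_one, one_mul, pow_one]⟩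
    · exact ⟨Finsupp.single 0 c0, by rw [ofCoeffs_single, pow_zero, mul_one]⟩
  | zero => exact ⟨0, (ofCoeffs_zero p m Fq k hFq).symm⟩
  | one => exact ⟨Finsupp.single 0 1, by rw [ofCoeffs_single, ml_one, pow_zero, mul_one]⟩
  | add x y _ _ hx hy =>
    obtain ⟨c, rfl⟩ := hx; obtain ⟨d, rfl⟩ := hy
    exact ⟨c + d, (ofCoeffs_add p m Fq k hFq c d).symm⟩
  | neg x _ hx =>
    obtain ⟨c, rfl⟩ := hx
    exact ⟨0 - c, by rw [ofCoeffs_sub, ofCoeffs_zero, zero_sub]⟩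
  | mul x y _ _ hx hy =>
    obtain ⟨c, rfl⟩ := hx; obtain ⟨d, rfl⟩ := hy
    obtain ⟨e, he⟩ := ofCoeffs_mul p m Fq k hFq c d
    exact ⟨e, he⟩

lemma surjective_of_ne_zero {f : AddMonoid.End (Kb k)}
    (hf : f ∈ skewPoly p m Fq k hFq) (h0 : f ≠ 0) : Function.Surjective f := by
  obtain ⟨c, rfl⟩ := exists_rep p m Fq k hFq hf
  intro t
  set P := toP Fq k c with hP
  have hPne : P ≠ 0 := by
    intro h
    apply h0
    refine end_ext k fun x => ?_
    rw [ofCoeffs_apply_eq_eval p m Fq k hFq, ← hP, h]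
    simp
  have hc0 : P.coeff 0 = 0 := by
    rw [Polynomial.coeff_zero_eq_eval_zero, ← ofCoeffs_apply_eq_eval p m Fq k hFq]
    simp
  have hdeg : 0 < P.natDegree := by
    rcases Nat.eq_zero_or_pos P.natDegree with h | h
    · exact absurd (by rw [Polynomial.eq_C_of_natDegree_eq_zero h, hc0, map_zero]) hPne
    · exact h
  have hdeg' : 0 < P.degree := Polynomial.natDegree_pos_iff_degree_pos.mp hdeg
  have hQ : (P - Polynomial.C t).degree ≠ 0 := by
    rw [Polynomial.degree_sub_C hdeg']
    exact ne_of_gt hdeg'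
  obtain ⟨x, hx⟩ := IsAlgClosed.exists_root _ hQ
  refine ⟨x, ?_⟩
  rw [ofCoeffs_apply_eq_eval p m Fq k hFq, ← hP]
  have : P.eval x - t = 0 := by simpa [Polynomial.IsRoot] using hx
  exact sub_eq_zero.mp this

lemma mul_ne_zero'' {f g : AddMonoid.End (Kb k)} (hg : g ∈ skewPoly p m Fq k hFq)
    (hf0 : f ≠ 0) (hg0 : g ≠ 0) : f * g ≠ 0 := by
  intro h
  apply hf0
  refine end_ext k fun y => ?_
  obtain ⟨x, rfl⟩ := surjective_of_ne_zero p m Fq k hFq hg hg0 y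
  have : (f * g) x = 0 := by rw [h]; rfl
  exact this

lemma left_cancel {u a b : AddMonoid.End (Kb k)} (hu : u ∈ skewPoly p m Fq k hFq)
    (hu0 : u ≠ 0) (ha : a ∈ skewPoly p m Fq k hFq) (hb : b ∈ skewPoly p m Fq k hFq)
    (h : u * a = u * b) : a = b := by
  by_contra hne
  have hab : a - b ≠ 0 := sub_ne_zero.mpr hne
  have hz : u * (a - b) = 0 := by rw [mul_sub, h, sub_self]
  exact mul_ne_zero'' p m Fq k hFq (Subring.sub_mem _ ha hb) hu0 hab hz

variable {γ : Polynomial Fq →+* k} {r : ℕ}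

lemma phi_mem (φ : DrinfeldModule p m Fq k hFq γ r) (a : Polynomial Fq) :
    φ.toRingHom a ∈ skewPoly p m Fq k hFq := by
  rw [φ.eq_ofCoeffs]
  exact ofCoeffs_mem p m Fq k hFq _

lemma phi_ne_zero (φ : DrinfeldModule p m Fq k hFq γ r) {a : Polynomial Fq} (ha : a ≠ 0) :
    φ.toRingHom a ≠ 0 := by
  rw [φ.eq_ofCoeffs]
  apply ofCoeffs_ne_zero
  intro h
  exact φ.coeff_top a ha (by rw [h]; rfl)

lemma phi_mem_E (φ : DrinfeldModule p m Fq k hFq γ r) (a : Polynomial Fq) :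
    φ.toRingHom a ∈ EndRing p m Fq k hFq φ := by
  refine ⟨phi_mem p m Fq k hFq φ a, Subring.mem_centralizer_iff.mpr fun g hg => ?_⟩
  obtain ⟨b, rfl⟩ := hg
  rw [← map_mul, ← map_mul, mul_comm]

/-- the `q^N`-power map is surjective on the finite field `k` -/
lemma qpow_surjective (N : ℕ) (hq : Fintype.card Fq = p ^ m) :
    Function.Surjective fun x : k => x ^ Fintype.card Fq ^ N := by
  have heq : ∀ x : k, x ^ Fintype.card Fq ^ N = x ^ p ^ (m * N) := by
    intro x; rw [hq, ← pow_mul]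
  have hinj : Function.Injective fun x : k => x ^ Fintype.card Fq ^ N := by
    intro a b h
    simp only [heq] at h
    exact (iterateFrobenius k p (m * N)).injective
      (by simpa [iterateFrobenius_def] using h)
  exact Finite.injective_iff_surjective.mp hinj

/-- Left division with remainder by `ofCoeffs d` where `d` has top degree `N`. -/
lemma div_aux (d : ℕ →₀ k) (N : ℕ) (hdN : d N ≠ 0) (hds : ∀ i, N < i → d i = 0)
    (M : ℕ) :
    ∀ c : ℕ →₀ k, (∀ i, M < i → c i = 0) →
      ∃ g ∈ skewPoly p m Fq k hFq, ∃ c' : ℕ →₀ k, (∀ i, N ≤ i → c' i = 0) ∧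
        ofCoeffs p m Fq k hFq c
          = ofCoeffs p m Fq k hFq d * g + ofCoeffs p m Fq k hFq c' := by
  induction M using Nat.strong_induction_on with
  | _ M ih =>
    intro c hc
    by_cases hMN : M < N
    · exact ⟨0, zero_mem _, c, fun i hi => hc i (lt_of_lt_of_le hMN hi),
        by rw [mul_zero, zero_add]⟩
    push_neg at hMN
    set s : ℕ := M - N with hs
    have hNs : N + s = M := by omega
    obtain ⟨b, hb⟩ := qpow_surjective p m Fq k N hFq (c M * (d N)⁻¹)
    have hbN : d N * b ^ Fintype.card Fq ^ N = c M := by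
      have hb' : b ^ Fintype.card Fq ^ N = c M * (d N)⁻¹ := hb
      rw [hb', mul_comm, mul_assoc, inv_mul_cancel₀ hdN, mul_one]
    set d₂ : ℕ →₀ k := d.sum fun i x => Finsupp.single (i + s) (x * b ^ Fintype.card Fq ^ i)
      with hd₂
    have hmul : ofCoeffs p m Fq k hFq d * (ml k b * tau p m Fq k hFq ^ s)
        = ofCoeffs p m Fq k hFq d₂ := ofCoeffs_mul_monomial p m Fq k hFq d s b
    have hd₂top : d₂ M = c M := by
      rw [hd₂, Finsupp.sum_apply]
      rw [Finsupp.sum, Finset.sum_eq_single_of_mem N (Finsupp.mem_support_iff.mpr hdN)]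
      · rw [hNs, Finsupp.single_apply, if_pos rfl, hbN]
      · intro j _ hj
        rw [Finsupp.single_apply, if_neg]
        omega
    have hd₂hi : ∀ i, M < i → d₂ i = 0 := by
      intro i hi
      rw [hd₂, Finsupp.sum_apply, Finsupp.sum, Finset.sum_eq_zero]
      intro j hj
      have hjN : j ≤ N := by
        by_contra hgt
        exact (Finsupp.mem_support_iff.mp hj) (hds j (by omega))
      rw [Finsupp.single_apply, if_neg (by omega)]
    set c₂ : ℕ →₀ k := c - d₂ with hc₂
    have hc₂hi : ∀ i, M ≤ i → c₂ i = 0 := by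
      intro i hi
      rcases eq_or_lt_of_le hi with h | h
      · rw [hc₂, Finsupp.sub_apply, ← h, hd₂top, sub_self]
      · rw [hc₂, Finsupp.sub_apply, hc i h, hd₂hi i h, sub_self]
    have hdecomp : ofCoeffs p m Fq k hFq c
        = ofCoeffs p m Fq k hFq c₂ + ofCoeffs p m Fq k hFq d₂ := by
      rw [← ofCoeffs_add, hc₂, sub_add_cancel]
    rcases Nat.eq_zero_or_pos M with hM0 | hMpos
    · have : c₂ = 0 := Finsupp.ext fun i => hc₂hi i (by omega)
      refine ⟨ml k b * tau p m Fq k hFq ^ s, ?_, 0, fun i _ => rfl, ?_⟩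
      · exact Subring.mul_mem _ (ml_mem p m Fq k hFq b)
          (Subring.pow_mem _ (tau_mem p m Fq k hFq) s)
      · rw [hdecomp, this, ofCoeffs_zero, zero_add, add_zero, ← hmul]
    · obtain ⟨g', hg', c', hc', heq⟩ := ih (M - 1) (by omega) c₂
        (fun i hi => hc₂hi i (by omega))
      refine ⟨g' + (ml k b * tau p m Fq k hFq ^ s),
        Subring.add_mem _ hg' (Subring.mul_mem _ (ml_mem p m Fq k hFq b)
          (Subring.pow_mem _ (tau_mem p m Fq k hFq) s)), c', hc', ?_⟩
      rw [hdecomp, heq, ← hmul, mul_add]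
      abel

/-- key finiteness argument: some `t·φ_a` is left-divisible by `u`. -/
lemma exists_denominator (φ : DrinfeldModule p m Fq k hFq γ r)
    {u t : AddMonoid.End (Kb k)} (hu : u ∈ skewPoly p m Fq k hFq) (hu0 : u ≠ 0)
    (ht : t ∈ skewPoly p m Fq k hFq) :
    ∃ a : Polynomial Fq, a ≠ 0 ∧ ∃ g ∈ skewPoly p m Fq k hFq,
      t * φ.toRingHom a = u * g := by
  obtain ⟨d, rfl⟩ := exists_rep p m Fq k hFq hu
  have hd : d ≠ 0 := by
    intro h
    exact hu0 (by rw [h, ofCoeffs_zero])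
  have hne : d.support.Nonempty := Finsupp.support_nonempty_iff.mpr hd
  set N := d.support.max' hne with hN
  have hdN : d N ≠ 0 := Finsupp.mem_support_iff.mp (d.support.max'_mem hne)
  have hds : ∀ i, N < i → d i = 0 := by
    intro i hi
    by_contra h
    exact absurd (d.support.le_max' i (Finsupp.mem_support_iff.mpr h)) (not_le.mpr hi)
  have key : ∀ a : Polynomial Fq, ∃ g ∈ skewPoly p m Fq k hFq, ∃ c' : ℕ →₀ k,
      (∀ i, N ≤ i → c' i = 0) ∧
      t * φ.toRingHom a = ofCoeffs p m Fq k hFq d * g + ofCoeffs p m Fq k hFq c' := by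
    intro a
    obtain ⟨c, hcrep⟩ := exists_rep p m Fq k hFq
      (Subring.mul_mem _ ht (phi_mem p m Fq k hFq φ a))
    have hbound : ∀ i, (c.support.sup id) < i → c i = 0 := by
      intro i hi
      by_contra h
      exact absurd (Finset.le_sup (f := id) (Finsupp.mem_support_iff.mpr h))
        (not_le.mpr hi)
    obtain ⟨g, hg, c', hc', heq⟩ :=
      div_aux p m Fq k hFq d N hdN hds (c.support.sup id) c hbound
    exact ⟨g, hg, c', hc', by rw [hcrep, heq]⟩
  choose g hg cr hcr heq using key
  obtain ⟨a₁, a₂, hane, hfeq⟩ := Finite.exists_ne_map_eq_of_infinite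
    (fun a : Polynomial Fq => fun i : Fin N => cr a i)
  have hcreq : cr a₁ = cr a₂ := by
    ext i
    by_cases hiN : i < N
    · exact congrFun hfeq ⟨i, hiN⟩
    · rw [hcr a₁ i (le_of_not_gt hiN), hcr a₂ i (le_of_not_gt hiN)]
  refine ⟨a₁ - a₂, sub_ne_zero.mpr hane, g a₁ - g a₂,
    Subring.sub_mem _ (hg a₁) (hg a₂), ?_⟩
  rw [map_sub, mul_sub, heq a₁, heq a₂, hcreq, mul_sub]
  abel

lemma mem_leftSpan_of_mem {s : Set (AddMonoid.End (Kb k))} {x : AddMonoid.End (Kb k)}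
    (hx : x ∈ s) : x ∈ leftSpan p m Fq k hFq s :=
  AddSubgroup.subset_closure ⟨1, one_mem _, x, hx, (one_mul x).symm⟩

end Helpers

/-- Let `I` and `J` be nonzero kernel ideals of `E = End_k(φ)` (assumed
commutative).  If `I*φ` and `J*φ` are isomorphic Drinfeld modules over `k`, then `I = J·u`
for some nonzero `u ∈ D = E ⊗_A F` (encoded as `u = e/φ_a`: `I·φ_a = J·e` with `e ∈ E`,
`a ∈ A` both nonzero). -/
theorem statement14
    (p m : ℕ) [Fact p.Prime] (Fq k : Type) [Field Fq] [Fintype Fq]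
    [Field k] [Fintype k] [CharP k p] (hFq : Fintype.card Fq = p ^ m)
    (γ : Polynomial Fq →+* k) (r : ℕ) (φ : DrinfeldModule p m Fq k hFq γ r)
    (hcomm : ∀ x ∈ EndRing p m Fq k hFq φ, ∀ y ∈ EndRing p m Fq k hFq φ, x * y = y * x)
    (I J : Set (AddMonoid.End (Kb k)))
    (hI : IsIdealOf k (EndRing p m Fq k hFq φ) I) (hI0 : I ≠ {0})
    (hJ : IsIdealOf k (EndRing p m Fq k hFq φ) J) (hJ0 : J ≠ {0})
    (hIker : IsKernelIdeal p m Fq k hFq φ I)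
    (hJker : IsKernelIdeal p m Fq k hFq φ J)
    (uI uJ : AddMonoid.End (Kb k)) (ψI ψJ : DrinfeldModule p m Fq k hFq γ r)
    (hgenI : IsIdealGen p m Fq k hFq I uI)
    (hstarI : ∀ a, uI * φ.toRingHom a = ψI.toRingHom a * uI)
    (hgenJ : IsIdealGen p m Fq k hFq J uJ)
    (hstarJ : ∀ a, uJ * φ.toRingHom a = ψJ.toRingHom a * uJ)
    (hiso : Isomorphic p m Fq k hFq ψI ψJ) :
    LinEquiv p m Fq k hFq φ (EndRing p m Fq k hFq φ) I J := by
  classical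
  obtain ⟨c, hc0, hcint⟩ := hiso
  -- membership descriptions of the left spans
  have hspanI : ∀ x, x ∈ leftSpan p m Fq k hFq I ↔
      ∃ y ∈ skewPoly p m Fq k hFq, x = y * uI := by
    intro x
    have h := Set.ext_iff.mp hgenI.2 x
    simpa using h
  have hspanJ : ∀ x, x ∈ leftSpan p m Fq k hFq J ↔
      ∃ y ∈ skewPoly p m Fq k hFq, x = y * uJ := by
    intro x
    have h := Set.ext_iff.mp hgenJ.2 x
    simpa using h
  -- kernel ideal membership criteria
  have hIk : ∀ x, (x ∈ leftSpan p m Fq k hFq I ∧ MemD p m Fq k hFq φ x) ↔ x ∈ I :=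
    fun x => Set.ext_iff.mp hIker x
  have hJk : ∀ x, (x ∈ leftSpan p m Fq k hFq J ∧ MemD p m Fq k hFq φ x) ↔ x ∈ J :=
    fun x => Set.ext_iff.mp hJker x
  -- `uI` and `uJ` are nonzero
  have hex : ∀ (S : Set (AddMonoid.End (Kb k))), (0 : AddMonoid.End (Kb k)) ∈ S →
      S ≠ {0} → ∃ x ∈ S, x ≠ 0 := by
    intro S h0 hS
    by_contra h
    push_neg at h
    exact hS (Set.eq_singleton_iff_unique_mem.mpr ⟨h0, h⟩)
  have huI0 : uI ≠ 0 := by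
    obtain ⟨x0, hx0I, hx0⟩ := hex I hI.2.1 hI0
    obtain ⟨y, hy, hxy⟩ := (hspanI x0).mp (mem_leftSpan_of_mem p m Fq k hFq hx0I)
    intro h
    exact hx0 (by rw [hxy, h, mul_zero])
  have huJ0 : uJ ≠ 0 := by
    obtain ⟨x0, hx0J, hx0⟩ := hex J hJ.2.1 hJ0
    obtain ⟨y, hy, hxy⟩ := (hspanJ x0).mp (mem_leftSpan_of_mem p m Fq k hFq hx0J)
    intro h
    exact hx0 (by rw [hxy, h, mul_zero])
  -- the unit `v = ml c` and the modified generator `w = v * uI`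
  have hvinv : ml k c⁻¹ * ml k c = 1 := by
    rw [← ml_mul, inv_mul_cancel₀ hc0, ml_one]
  set w : AddMonoid.End (Kb k) := ml k c * uI with hwdef
  have hwR : w ∈ skewPoly p m Fq k hFq :=
    Subring.mul_mem _ (ml_mem p m Fq k hFq c) hgenI.1
  have hw0 : w ≠ 0 := by
    intro h
    apply huI0
    have : uI = ml k c⁻¹ * w := by rw [hwdef, ← mul_assoc, hvinv, one_mul]
    rw [this, h, mul_zero]
  have hstarw : ∀ a, w * φ.toRingHom a = ψJ.toRingHom a * w := by
    intro a
    rw [hwdef, mul_assoc, hstarI a, ← mul_assoc, hcint a, mul_assoc]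
  have hspanIw : ∀ x, x ∈ leftSpan p m Fq k hFq I ↔
      ∃ y ∈ skewPoly p m Fq k hFq, x = y * w := by
    intro x
    rw [hspanI x]
    constructor
    · rintro ⟨y, hy, rfl⟩
      refine ⟨y * ml k c⁻¹, Subring.mul_mem _ hy (ml_mem p m Fq k hFq _), ?_⟩
      rw [hwdef, mul_assoc, ← mul_assoc (ml k c⁻¹), hvinv, one_mul]
    · rintro ⟨y, hy, rfl⟩
      exact ⟨y * ml k c, Subring.mul_mem _ hy (ml_mem p m Fq k hFq _),
        by rw [hwdef, mul_assoc]⟩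
  -- the fraction `η = e / φ_a`, i.e. `w · φ_a = uJ · e`
  obtain ⟨a, ha0, e, heR, heq⟩ :=
    exists_denominator p m Fq k hFq φ hgenJ.1 huJ0 hwR
  have hphia : φ.toRingHom a ≠ 0 := phi_ne_zero p m Fq k hFq φ ha0
  have he0 : e ≠ 0 := by
    intro h
    exact mul_ne_zero'' p m Fq k hFq (phi_mem p m Fq k hFq φ a) hw0 hphia
      (by rw [heq, h, mul_zero])
  have hecomm : ∀ b, e * φ.toRingHom b = φ.toRingHom b * e := by
    intro b
    apply left_cancel p m Fq k hFq hgenJ.1 huJ0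
      (Subring.mul_mem _ heR (phi_mem p m Fq k hFq φ b))
      (Subring.mul_mem _ (phi_mem p m Fq k hFq φ b) heR)
    calc uJ * (e * φ.toRingHom b)
        = (uJ * e) * φ.toRingHom b := (mul_assoc _ _ _).symm
      _ = (w * φ.toRingHom a) * φ.toRingHom b := by rw [heq]
      _ = w * φ.toRingHom (a * b) := by rw [mul_assoc, ← map_mul]
      _ = w * φ.toRingHom (b * a) := by rw [mul_comm a b]
      _ = (w * φ.toRingHom b) * φ.toRingHom a := by rw [map_mul, ← mul_assoc]
      _ = (ψJ.toRingHom b * w) * φ.toRingHom a := by rw [hstarw b]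
      _ = ψJ.toRingHom b * (uJ * e) := by rw [mul_assoc, heq]
      _ = (ψJ.toRingHom b * uJ) * e := (mul_assoc _ _ _).symm
      _ = (uJ * φ.toRingHom b) * e := by rw [hstarJ b]
      _ = uJ * (φ.toRingHom b * e) := mul_assoc _ _ _
  have heE : e ∈ EndRing p m Fq k hFq φ :=
    Subring.mem_inf.mpr ⟨heR, Subring.mem_centralizer_iff.mpr fun g hg => by
      obtain ⟨b, rfl⟩ := hg; exact (hecomm b).symm⟩
  -- an "integrality" fraction for `e` itself: `φ_{a₂} = e · f`
  obtain ⟨a2, ha20, f, hfR, hfeq⟩ :=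
    exists_denominator p m Fq k hFq φ heR he0 (one_mem _)
  rw [one_mul] at hfeq
  have hfcomm : ∀ b, f * φ.toRingHom b = φ.toRingHom b * f := by
    intro b
    apply left_cancel p m Fq k hFq heR he0
      (Subring.mul_mem _ hfR (phi_mem p m Fq k hFq φ b))
      (Subring.mul_mem _ (phi_mem p m Fq k hFq φ b) hfR)
    calc e * (f * φ.toRingHom b)
        = (e * f) * φ.toRingHom b := (mul_assoc _ _ _).symm
      _ = φ.toRingHom a2 * φ.toRingHom b := by rw [hfeq]
      _ = φ.toRingHom b * φ.toRingHom a2 := by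
          rw [← map_mul, ← map_mul, mul_comm a2 b]
      _ = φ.toRingHom b * (e * f) := by rw [hfeq]
      _ = (φ.toRingHom b * e) * f := (mul_assoc _ _ _).symm
      _ = (e * φ.toRingHom b) * f := by rw [hecomm b]
      _ = e * (φ.toRingHom b * f) := mul_assoc _ _ _
  have hfE : f ∈ EndRing p m Fq k hFq φ :=
    Subring.mem_inf.mpr ⟨hfR, Subring.mem_centralizer_iff.mpr fun g hg => by
      obtain ⟨b, rfl⟩ := hg; exact (hfcomm b).symm⟩
  -- conclusion
  refine ⟨e, heE, he0, a, ha0, ?_⟩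
  ext z
  simp only [Set.mem_image]
  constructor
  · rintro ⟨x, hxI, rfl⟩
    have hxD := (hIk x).mpr hxI
    obtain ⟨y, hyR, hxyw⟩ := (hspanIw x).mp hxD.1
    obtain ⟨b, hb0, hbE⟩ := hxD.2
    subst hxyw
    refine ⟨y * uJ, (hJk _).mp ⟨(hspanJ _).mpr ⟨y, hyR, rfl⟩,
      ⟨b * a2, mul_ne_zero hb0 ha20, ?_⟩⟩, ?_⟩
    · have key : (y * uJ) * φ.toRingHom (b * a2)
          = ((y * w) * φ.toRingHom b) * (φ.toRingHom a * f) := by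
        rw [map_mul, hfeq]
        simp only [← mul_assoc]
        rw [mul_assoc (y * uJ) (φ.toRingHom b) e, ← hecomm b, ← mul_assoc,
          mul_assoc y uJ e, ← heq, ← mul_assoc,
          mul_assoc (y * w) (φ.toRingHom a) (φ.toRingHom b), ← map_mul,
          mul_comm a b, map_mul, ← mul_assoc]
      rw [key]
      exact Subring.mul_mem _ hbE
        (Subring.mul_mem _ (phi_mem_E p m Fq k hFq φ a) hfE)
    · show (y * uJ) * e = (y * w) * φ.toRingHom a
      rw [mul_assoc, ← heq, ← mul_assoc]
  · rintro ⟨z, hzJ, rfl⟩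
    have hzD := (hJk z).mpr hzJ
    obtain ⟨y, hyR, hzyu⟩ := (hspanJ z).mp hzD.1
    obtain ⟨b, hb0, hbE⟩ := hzD.2
    subst hzyu
    refine ⟨y * w, (hIk _).mp ⟨(hspanIw _).mpr ⟨y, hyR, rfl⟩,
      ⟨a * b, mul_ne_zero ha0 hb0, ?_⟩⟩, ?_⟩
    · have key : (y * w) * φ.toRingHom (a * b) = ((y * uJ) * φ.toRingHom b) * e := by
        rw [map_mul]
        simp only [← mul_assoc]
        rw [mul_assoc y w (φ.toRingHom a), heq, ← mul_assoc,
          mul_assoc (y * uJ) e (φ.toRingHom b), hecomm b, ← mul_assoc]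
      rw [key]
      exact Subring.mul_mem _ hbE heE
    · show (y * w) * φ.toRingHom a = (y * uJ) * e
      rw [mul_assoc, heq, ← mul_assoc]

end Drinfeld
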